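/- arXiv:math/0206245 — 2 statements merged into one kernel-verified Lean document; each statement's English description precedes it below -/
import Mathlib

section
/- The representation of the quantum SU(2) relations on l²(ℤ≥0) given by a e_j = √(1−q^{2j}) e_{j−1}, c e_j = q^j e_j is irreducible: any closed subspace of l²(ℤ≥0) invariant under a, a*, c, c* is {0} or the whole space. -/
open scoped InnerProductSpace ComplexConjugate ENNReal

lemma qsu2_coord (f : lp (fun _ : ℕ => ℂ) 2) (j : ℕ) :
    ⟪lp.single 2 j 1, f⟫_ℂ = f j := by
  rw [lp.inner_single_left, RCLike.inner_apply]
  simp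

lemma qsu2_single_coord (i j : ℕ) :
    (lp.single 2 i (1:ℂ) : lp (fun _ : ℕ => ℂ) 2) j = if j = i then 1 else 0 := by
  rw [lp.single_apply]
  split_ifs with h <;> simp [h]

lemma qsu2_astar_single (q : ℝ)
    (a : lp (fun _ : ℕ => ℂ) 2 →L[ℂ] lp (fun _ : ℕ => ℂ) 2)
    (ha0 : a (lp.single 2 0 1) = 0)
    (ha : ∀ j : ℕ, a (lp.single 2 (j + 1) 1) =
      ((Real.sqrt (1 - q ^ (2 * (j + 1))) : ℂ)) • lp.single 2 j 1) (j : ℕ) :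
    ContinuousLinearMap.adjoint a (lp.single 2 j 1) =
      ((Real.sqrt (1 - q ^ (2 * (j + 1))) : ℂ)) • lp.single 2 (j + 1) 1 := by
  apply lp.ext; funext k
  have h1 : (ContinuousLinearMap.adjoint a (lp.single 2 j 1)) k
      = ⟪a (lp.single 2 k 1), (lp.single 2 j 1 : lp (fun _ : ℕ => ℂ) 2)⟫_ℂ := by
    rw [← qsu2_coord, ContinuousLinearMap.adjoint_inner_right]
  have h2 : ((((Real.sqrt (1 - q ^ (2 * (j + 1))) : ℂ)) • lp.single 2 (j + 1) 1 :
      lp (fun _ : ℕ => ℂ) 2)) k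
      = (Real.sqrt (1 - q ^ (2 * (j + 1))) : ℂ) * (if k = j + 1 then 1 else 0) := by
    rw [lp.coeFn_smul, Pi.smul_apply, qsu2_single_coord, smul_eq_mul]
  rw [h1, h2]
  cases k with
  | zero =>
      rw [ha0]
      simp
  | succ m =>
      rw [ha m, inner_smul_left, qsu2_coord, qsu2_single_coord]
      simp only [Complex.conj_ofReal, Nat.succ_eq_add_one, add_left_inj]
      by_cases h : m = j
      · subst h; simp
      · simp [h, Ne.symm h]

lemma qsu2_cstar_single (q : ℝ)
    (c : lp (fun _ : ℕ => ℂ) 2 →L[ℂ] lp (fun _ : ℕ => ℂ) 2)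
    (hc : ∀ j : ℕ, c (lp.single 2 j 1) = ((q ^ j : ℂ)) • lp.single 2 j 1) (j : ℕ) :
    ContinuousLinearMap.adjoint c (lp.single 2 j 1) = ((q ^ j : ℂ)) • lp.single 2 j 1 := by
  apply lp.ext; funext k
  have h1 : (ContinuousLinearMap.adjoint c (lp.single 2 j 1)) k
      = ⟪c (lp.single 2 k 1), (lp.single 2 j 1 : lp (fun _ : ℕ => ℂ) 2)⟫_ℂ := by
    rw [← qsu2_coord, ContinuousLinearMap.adjoint_inner_right]
  rw [h1, hc k, inner_smul_left, qsu2_coord, qsu2_single_coord, lp.coeFn_smul,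
    Pi.smul_apply, qsu2_single_coord, smul_eq_mul]
  by_cases h : k = j
  · subst h; simp
  · simp [h, Ne.symm h]

lemma qsu2_a_coord (q : ℝ)
    (a : lp (fun _ : ℕ => ℂ) 2 →L[ℂ] lp (fun _ : ℕ => ℂ) 2)
    (ha0 : a (lp.single 2 0 1) = 0)
    (ha : ∀ j : ℕ, a (lp.single 2 (j + 1) 1) =
      ((Real.sqrt (1 - q ^ (2 * (j + 1))) : ℂ)) • lp.single 2 j 1)
    (f : lp (fun _ : ℕ => ℂ) 2) (j : ℕ) :
    (a f) j = (Real.sqrt (1 - q ^ (2 * (j + 1))) : ℂ) * f (j + 1) := by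
  rw [← qsu2_coord, ← ContinuousLinearMap.adjoint_inner_left,
    qsu2_astar_single q a ha0 ha j, inner_smul_left, qsu2_coord, Complex.conj_ofReal]

lemma qsu2_c_coord (q : ℝ)
    (c : lp (fun _ : ℕ => ℂ) 2 →L[ℂ] lp (fun _ : ℕ => ℂ) 2)
    (hc : ∀ j : ℕ, c (lp.single 2 j 1) = ((q ^ j : ℂ)) • lp.single 2 j 1)
    (f : lp (fun _ : ℕ => ℂ) 2) (j : ℕ) :
    (c f) j = (q ^ j : ℂ) * f j := by
  rw [← qsu2_coord, ← ContinuousLinearMap.adjoint_inner_left,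
    qsu2_cstar_single q c hc j, inner_smul_left, qsu2_coord]
  simp [map_pow, Complex.conj_ofReal]

lemma qsu2_norm_sq (f : lp (fun _ : ℕ => ℂ) 2) : ‖f‖ ^ 2 = ∑' j, ‖f j‖ ^ 2 := by
  have hp : (0:ℝ) < (2:ℝ≥0∞).toReal := by norm_num
  have h1 := lp.norm_rpow_eq_tsum hp f
  calc ‖f‖ ^ 2 = ‖f‖ ^ (2:ℝ≥0∞).toReal := by norm_cast
    _ = ∑' j, ‖f j‖ ^ (2:ℝ≥0∞).toReal := h1
    _ = ∑' j, ‖f j‖ ^ 2 := by norm_cast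

lemma qsu2_summable_sq (f : lp (fun _ : ℕ => ℂ) 2) :
    Summable fun j => ‖f j‖ ^ 2 := by
  have hp : (0:ℝ) < (2:ℝ≥0∞).toReal := by norm_num
  have := (lp.memℓp f).summable hp
  convert this using 2 with j
  norm_cast

lemma qsu2_c_contract (q : ℝ) (hq0 : 0 < q) (hq1 : q < 1)
    (c : lp (fun _ : ℕ => ℂ) 2 →L[ℂ] lp (fun _ : ℕ => ℂ) 2)
    (hc : ∀ j : ℕ, c (lp.single 2 j 1) = ((q ^ j : ℂ)) • lp.single 2 j 1)
    (z : lp (fun _ : ℕ => ℂ) 2) (hz0 : z 0 = 0) : ‖c z‖ ≤ q * ‖z‖ := by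
  have key : ‖c z‖ ^ 2 ≤ q ^ 2 * ‖z‖ ^ 2 := by
    rw [qsu2_norm_sq, qsu2_norm_sq, ← tsum_mul_left]
    refine Summable.tsum_le_tsum ?_ (qsu2_summable_sq (c z)) ((qsu2_summable_sq z).mul_left _)
    intro j
    rw [qsu2_c_coord q c hc]
    cases j with
    | zero => simp [hz0]
    | succ m =>
        have hqm : q ^ (m + 1) ≤ q := by
          calc q ^ (m + 1) ≤ q ^ 1 := pow_le_pow_of_le_one hq0.le hq1.le (by omega)
            _ = q := pow_one q
        have h1 : ‖((q : ℂ) ^ (m + 1)) * z (m + 1)‖ = q ^ (m + 1) * ‖z (m + 1)‖ := by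
          rw [norm_mul]
          congr 1
          rw [norm_pow, Complex.norm_real, Real.norm_of_nonneg hq0.le]
        rw [h1, mul_pow]
        have h2 : (q ^ (m + 1)) ^ 2 ≤ q ^ 2 :=
          pow_le_pow_left₀ (pow_nonneg hq0.le _) hqm 2
        exact mul_le_mul_of_nonneg_right h2 (sq_nonneg _)
  nlinarith [norm_nonneg (c z), norm_nonneg z, mul_nonneg hq0.le (norm_nonneg z)]

/-- For `0 < q < 1`, the representation of the quantum SU(2) relations on `ℓ²(ℤ≥0)`
given by the weighted backward shift `a` and the diagonal operator `c` is irreducible: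
any closed subspace invariant under `a`, `a*`, `c`, `c*` is `{0}` or the whole space. -/
theorem quantum_su2_rep_irreducible (q : ℝ) (hq0 : 0 < q) (hq1 : q < 1)
    (a c : lp (fun _ : ℕ => ℂ) 2 →L[ℂ] lp (fun _ : ℕ => ℂ) 2)
    (ha0 : a (lp.single 2 0 1) = 0)
    (ha : ∀ j : ℕ, a (lp.single 2 (j + 1) 1) =
      ((Real.sqrt (1 - q ^ (2 * (j + 1))) : ℂ)) • lp.single 2 j 1)
    (hc : ∀ j : ℕ, c (lp.single 2 j 1) = ((q ^ j : ℂ)) • lp.single 2 j 1)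
    (K : Submodule ℂ (lp (fun _ : ℕ => ℂ) 2))
    (hKclosed : IsClosed (K : Set (lp (fun _ : ℕ => ℂ) 2)))
    (hKa : ∀ x ∈ K, a x ∈ K)
    (hKastar : ∀ x ∈ K, ContinuousLinearMap.adjoint a x ∈ K)
    (hKc : ∀ x ∈ K, c x ∈ K)
    (hKcstar : ∀ x ∈ K, ContinuousLinearMap.adjoint c x ∈ K) :
    K = ⊥ ∨ K = ⊤ := by
  have hsqrt_pos : ∀ j : ℕ, (0:ℝ) < Real.sqrt (1 - q ^ (2 * (j + 1))) := by
    intro j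
    apply Real.sqrt_pos.mpr
    have : q ^ (2 * (j + 1)) < 1 := pow_lt_one₀ hq0.le hq1 (by omega)
    linarith
  by_cases hK : K = ⊥
  · exact Or.inl hK
  right
  -- there is a nonzero element of K
  obtain ⟨x, hxK, hx0⟩ : ∃ x ∈ K, x ≠ 0 := by
    by_contra h
    push_neg at h
    apply hK
    ext y
    simp only [Submodule.mem_bot]
    exact ⟨fun hy => h y hy, fun hy => hy ▸ K.zero_mem⟩
  have hxcoord : ∃ j, x j ≠ 0 := by
    by_contra h
    push_neg at h
    apply hx0
    apply lp.ext
    funext j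
    simpa using h j
  -- Step A: produce an element of K with nonzero 0-th coordinate
  have stepA : ∀ j : ℕ, ∀ v : lp (fun _ : ℕ => ℂ) 2, v ∈ K → v j ≠ 0 →
      ∃ y ∈ K, y 0 ≠ (0:ℂ) := by
    intro j
    induction j with
    | zero => exact fun v hvK hv => ⟨v, hvK, hv⟩
    | succ m ih =>
        intro v hvK hv
        refine ih (a v) (hKa v hvK) ?_
        rw [qsu2_a_coord q a ha0 ha v m]
        exact mul_ne_zero (Complex.ofReal_ne_zero.mpr (hsqrt_pos m).ne') hv
  obtain ⟨j, hj⟩ := hxcoord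
  obtain ⟨y, hyK, hy0⟩ := stepA j x hxK hj
  -- Step B: lp.single 2 0 1 ∈ K
  have hce0 : c (lp.single 2 0 1) = lp.single 2 0 1 := by
    rw [hc 0, pow_zero, one_smul]
  set e0 : lp (fun _ : ℕ => ℂ) 2 := lp.single 2 0 1 with he0
  set z : lp (fun _ : ℕ => ℂ) 2 := y - (y 0) • e0 with hz
  have hz0 : z 0 = 0 := by
    simp only [hz, lp.coeFn_sub, Pi.sub_apply, lp.coeFn_smul, Pi.smul_apply, he0]
    rw [qsu2_single_coord]
    simp
  -- iterates
  have hiter : ∀ n : ℕ, (⇑c)^[n] y = (⇑c)^[n] z + (y 0) • e0 ∧ ((⇑c)^[n] z) 0 = 0 ∧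
      ‖(⇑c)^[n] z‖ ≤ q ^ n * ‖z‖ ∧ (⇑c)^[n] y ∈ K := by
    intro n
    induction n with
    | zero =>
        refine ⟨by simp [hz], hz0, by simp, hyK⟩
    | succ n ih =>
        obtain ⟨ih1, ih2, ih3, ih4⟩ := ih
        have hz0' : ((⇑c)^[n + 1] z) 0 = 0 := by
          rw [Function.iterate_succ_apply', qsu2_c_coord q c hc, ih2, mul_zero]
        refine ⟨?_, hz0', ?_, ?_⟩
        · rw [Function.iterate_succ_apply', Function.iterate_succ_apply', ih1]
          rw [map_add, map_smul, hce0]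
        · rw [Function.iterate_succ_apply']
          calc ‖c ((⇑c)^[n] z)‖ ≤ q * ‖(⇑c)^[n] z‖ :=
                qsu2_c_contract q hq0 hq1 c hc _ ih2
            _ ≤ q * (q ^ n * ‖z‖) := by
                exact mul_le_mul_of_nonneg_left ih3 hq0.le
            _ = q ^ (n + 1) * ‖z‖ := by ring
        · rw [Function.iterate_succ_apply']
          exact hKc _ ih4
  have htend : Filter.Tendsto (fun n => (⇑c)^[n] y) Filter.atTop (nhds ((y 0) • e0)) := by
    rw [tendsto_iff_norm_sub_tendsto_zero]
    have hb : Filter.Tendsto (fun n : ℕ => q ^ n * ‖z‖) Filter.atTop (nhds 0) := by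
      have := tendsto_pow_atTop_nhds_zero_of_lt_one hq0.le hq1
      simpa using this.mul_const ‖z‖
    refine squeeze_zero (fun n => norm_nonneg _) (fun n => ?_) hb
    obtain ⟨h1, _, h3, _⟩ := hiter n
    rw [h1]
    rw [add_sub_cancel_right]
    exact h3
  have he0K : e0 ∈ K := by
    have hmem : (y 0) • e0 ∈ K :=
      hKclosed.mem_of_tendsto htend
        (Filter.Eventually.of_forall fun n => (hiter n).2.2.2)
    have := K.smul_mem ((y 0)⁻¹) hmem
    rwa [smul_smul, inv_mul_cancel₀ hy0, one_smul] at this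
  -- Step C: all basis vectors belong to K
  have hsingles : ∀ j : ℕ, (lp.single 2 j 1 : lp (fun _ : ℕ => ℂ) 2) ∈ K := by
    intro j
    induction j with
    | zero => exact he0K
    | succ m ih =>
        have h1 := hKastar _ ih
        rw [qsu2_astar_single q a ha0 ha m] at h1
        have hs : ((Real.sqrt (1 - q ^ (2 * (m + 1))) : ℂ)) ≠ 0 :=
          Complex.ofReal_ne_zero.mpr (hsqrt_pos m).ne'
        have := K.smul_mem (((Real.sqrt (1 - q ^ (2 * (m + 1))) : ℂ))⁻¹) h1
        rwa [smul_smul, inv_mul_cancel₀ hs, one_smul] at this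
  -- Step D: K = ⊤
  rw [eq_top_iff]
  intro f _
  have hsum := lp.hasSum_single ENNReal.ofNat_ne_top f
  refine hKclosed.mem_of_tendsto hsum (Filter.Eventually.of_forall fun s => ?_)
  refine Submodule.sum_mem K fun i _ => ?_
  have : (lp.single 2 i (f i) : lp (fun _ : ℕ => ℂ) 2) = (f i) • lp.single 2 i 1 := by
    rw [← lp.single_smul]
    congr 1
    simp
  rw [this]
  exact K.smul_mem _ (hsingles i)
end

section
/- Let V be an inner product space decomposed as an orthogonal (internal) direct sum V = ⊕_{λ∈Λ} V(λ) of finite-dimensional subspaces. Let A ⊆ B ⊆ V be subspaces such that A = ⊕_λ (A ∩ V(λ)) and B = ⊕_λ (B ∩ V(λ)). If A is dense in B with respect to the inner product norm, then A = B. -/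
/-!
Project onto a single summand `V λ`. By orthogonality of the grading the projection maps `A`
into `A ⊓ V λ`, and since it is continuous and fixes `V λ`, every `b ∈ B ⊓ V λ` lies in the
closure of `A ⊓ V λ`. That space is finite-dimensional, hence closed, so `b ∈ A`.
-/

namespace Submodule

variable {𝕜 E ι : Type*} [RCLike 𝕜] [NormedAddCommGroup E] [InnerProductSpace 𝕜 E]

theorem starProjection_mem_inf_of_mem_iSup_inf {K : ι → Submodule 𝕜 E}
    (hK : Pairwise fun i j => K i ⟂ K j) (W : Submodule 𝕜 E) (j : ι)
    [(K j).HasOrthogonalProjection] {x : E} (hx : x ∈ ⨆ i, W ⊓ K i) :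
    (K j).starProjection x ∈ W ⊓ K j := by
  refine iSup_induction _ (motive := fun x => (K j).starProjection x ∈ W ⊓ K j) hx
    (fun i x hx => ?_) (by simp) fun x y hx hy => by simpa using add_mem hx hy
  obtain rfl | hij := eq_or_ne i j
  · rwa [starProjection_eq_self_iff.mpr hx.2]
  · rw [(starProjection_apply_eq_zero_iff _).mpr (isOrtho_iff_le.mp (hK hij) hx.2)]
    exact zero_mem _

theorem mem_of_mem_closure_of_eq_iSup_inf {K : ι → Submodule 𝕜 E}
    (hK : Pairwise fun i j => K i ⟂ K j) {W : Submodule 𝕜 E} (hW : W = ⨆ i, W ⊓ K i)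
    {j : ι} [FiniteDimensional 𝕜 (K j)] {x : E} (hxK : x ∈ K j)
    (hxW : x ∈ closure (W : Set E)) : x ∈ W := by
  have hclosed : IsClosed ((W ⊓ K j : Submodule 𝕜 E) : Set E) :=
    closed_of_finiteDimensional _
  have : (K j).starProjection x ∈ closure ((W ⊓ K j : Submodule 𝕜 E) : Set E) :=
    map_mem_closure (K j).starProjection.continuous hxW fun y hy =>
      starProjection_mem_inf_of_mem_iSup_inf hK W j (hW ▸ hy)
  rw [starProjection_eq_self_iff.mpr hxK, hclosed.closure_eq] at this
  exact this.1

end Submodule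

theorem graded_dense_subspace_eq_general
    {V : Type*} [NormedAddCommGroup V] [InnerProductSpace ℂ V]
    {Λ : Type*} (Vf : Λ → Submodule ℂ V)
    (hfin : ∀ lam, FiniteDimensional ℂ (Vf lam))
    (horth : ∀ lam mu, lam ≠ mu → ∀ x ∈ Vf lam, ∀ y ∈ Vf mu, (inner ℂ x y : ℂ) = 0)
    (A B : Submodule ℂ V) (hAB : A ≤ B)
    (hAgraded : A = ⨆ lam, A ⊓ Vf lam)
    (hBgraded : B = ⨆ lam, B ⊓ Vf lam)
    (hdense : ∀ b ∈ B, ∀ ε : ℝ, 0 < ε → ∃ a ∈ A, ‖b - a‖ < ε) :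
    A = B := by
  have hortho : Pairwise fun lam mu => Vf lam ⟂ Vf mu := fun lam mu hne =>
    Submodule.isOrtho_iff_inner_eq.mpr (horth lam mu hne)
  refine le_antisymm hAB ?_
  rw [hBgraded]
  refine iSup_le fun lam => ?_
  rintro b ⟨hbB, hbV⟩
  have hbA : b ∈ closure (A : Set V) := Metric.mem_closure_iff.mpr fun ε hε => by
    simpa only [dist_eq_norm, SetLike.mem_coe] using hdense b hbB ε hε
  have := hfin lam
  exact Submodule.mem_of_mem_closure_of_eq_iSup_inf hortho hAgraded hbV hbA

/-- Let `V` be a complex inner product space which is the orthogonal (internal) direct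
sum of a family of pairwise orthogonal finite-dimensional subspaces `V λ`.  If
`A ⊆ B ⊆ V` are subspaces compatible with the grading, i.e. `A = ⨆ λ, A ⊓ V λ` and
`B = ⨆ λ, B ⊓ V λ`, and `A` is dense in `B` for the inner product norm, then `A = B`. -/
theorem graded_dense_subspace_eq
    {V : Type*} [NormedAddCommGroup V] [InnerProductSpace ℂ V]
    {Λ : Type*} (Vf : Λ → Submodule ℂ V)
    (hfin : ∀ lam, FiniteDimensional ℂ (Vf lam))
    (horth : ∀ lam mu, lam ≠ mu → ∀ x ∈ Vf lam, ∀ y ∈ Vf mu, (inner ℂ x y : ℂ) = 0)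
    (htotal : (⨆ lam, Vf lam) = ⊤)
    (A B : Submodule ℂ V) (hAB : A ≤ B)
    (hAgraded : A = ⨆ lam, A ⊓ Vf lam)
    (hBgraded : B = ⨆ lam, B ⊓ Vf lam)
    (hdense : ∀ b ∈ B, ∀ ε : ℝ, 0 < ε → ∃ a ∈ A, ‖b - a‖ < ε) :
    A = B :=
  graded_dense_subspace_eq_general Vf hfin horth A B hAB hAgraded hBgraded hdense
end
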